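/- arXiv:1701.06954 — 3 statements merged into one kernel-verified Lean document; each statement's English description precedes it below -/
import Mathlib

section
/- Let G be a finite permutation group containing odd permutations. If F_G(-a) = 0 for a positive integer a ≥ 2, then F_G(-(a-1)) = 0. Consequently the set of negative integer roots of F_G is {-1, -2, …, -a} for some a ≥ 1. -/
open Polynomial

open scoped Classical

noncomputable section

/-- The number of cycles (including fixed points) of a permutation `g` on `Ω`. -/
def cycleCount {Ω : Type*} [Fintype Ω] (g : Equiv.Perm Ω) : ℕ :=
  Nat.card (MulAction.orbitRel.Quotient (Subgroup.zpowers g) Ω)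

/-- The cycle polynomial `F_G(x) = ∑_{g ∈ G} x^{c(g)}`. -/
def cyclePoly {Ω : Type*} [Fintype Ω] (G : Subgroup (Equiv.Perm Ω)) : Polynomial ℤ :=
  ∑ g : G, (X : Polynomial ℤ) ^ cycleCount (g : Equiv.Perm Ω)

/-!
Colour `Ω` with `a` colours and let permutations act on colourings. Since `a ^ c(g)` is the number
of colourings fixed by `g` and `sign g = (-1) ^ (|Ω| + c(g))`, double counting gives
`(-1) ^ |Ω| * F_G(-a) = ∑_f ∑_{g ∈ G_f} sign g`, where `G_f` is the stabiliser of the colouring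
`f` in `G`. The inner sum is a character sum over `G_f`: it is `|G_f|` if `G_f` is even and `0`
otherwise. Hence `F_G(-a) = 0` iff every `a`-colouring is fixed by an odd element of `G`. This
condition passes to fewer colours, holds for one colour as soon as `G` has an odd element, and
fails for `|Ω|` colours, where an injective colouring has trivial stabiliser.
-/

attribute [local instance] arrowAction

open MulAction Equiv Perm
open scoped Finset

section FixedColourings

variable {M α Y : Type*} [Group M] [MulAction M α]

def fixedByArrowEquiv (g : M) :
    fixedBy (α → Y) g ≃ (orbitRel.Quotient (Subgroup.zpowers g) α → Y) where
  toFun f := Quotient.lift (f : α → Y) <| by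
    rintro _ y ⟨⟨h, hh⟩, rfl⟩
    have hf : h • (f : α → Y) = f :=
      (Subgroup.zpowers_le (H := stabilizer M (f : α → Y))).mpr f.2 hh
    calc (f : α → Y) (h • y) = (h • (f : α → Y)) (h • y) := by rw [hf]
      _ = (f : α → Y) y := congrArg (f : α → Y) (inv_smul_smul h y)
  invFun F := ⟨F ∘ Quotient.mk _, funext fun x =>
    congrArg F <| Quotient.sound ⟨⟨g⁻¹, Subgroup.inv_mem _ (Subgroup.mem_zpowers g)⟩, rfl⟩⟩
  left_inv _ := rfl
  right_inv F := funext fun q => Quotient.inductionOn q fun _ => rfl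

lemma Function.Injective.smul_comp_eq_iff {Z : Type*} {c : Y → Z} (hc : Function.Injective c)
    (g : M) (f : α → Y) : g • (c ∘ f) = c ∘ f ↔ g • f = f :=
  hc.comp_left.eq_iff

end FixedColourings

lemma card_fixedBy_colourings {Ω : Type*} [Fintype Ω] (g : Perm Ω) (a : ℕ) :
    Nat.card (fixedBy (Ω → Fin a) g) = a ^ cycleCount g := by
  rw [Nat.card_congr (fixedByArrowEquiv g), Nat.card_fun, Nat.card_eq_fintype_card,
    Fintype.card_fin, cycleCount]

lemma mem_orbit_zpowers_iff_sameCycle {α : Type*} (g : Perm α) {x y : α} :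
    x ∈ orbit (Subgroup.zpowers g) y ↔ g.SameCycle y x := by
  constructor
  · rintro ⟨⟨h, hh⟩, rfl⟩
    obtain ⟨k, rfl⟩ := Subgroup.mem_zpowers_iff.mp hh
    exact ⟨k, rfl⟩
  · rintro ⟨k, rfl⟩
    exact ⟨⟨g ^ k, Subgroup.zpow_mem_zpowers g k⟩, rfl⟩

section CycleCount

variable {α : Type*} [Fintype α] [DecidableEq α] (g : Perm α)

def orbitZPowersEquiv :
    orbitRel.Quotient (Subgroup.zpowers g) α ≃ g.cycleFactorsFinset ⊕ {x // x ∉ g.support} :=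
  Equiv.ofBijective
    (Quotient.lift (fun x => if hx : x ∈ g.support
        then .inl ⟨g.cycleOf x, cycleOf_mem_cycleFactorsFinset_iff.mpr hx⟩ else .inr ⟨x, hx⟩) <| by
      intro x y hxy
      have hyx : g.SameCycle y x := (mem_orbit_zpowers_iff_sameCycle g).mp hxy
      by_cases hy : y ∈ g.support
      · have hx : x ∈ g.support := hyx.mem_support_iff.mp hy
        simp [hx, hy, hyx.cycleOf_eq]
      · simp [hy, (hyx.eq_of_left (notMem_support.mp hy)).symm])
    ⟨by
      intro p q hpq
      induction p using Quotient.inductionOn with | h x => ?_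
      induction q using Quotient.inductionOn with | h y => ?_
      simp only [Quotient.lift_mk] at hpq
      by_cases hx : x ∈ g.support <;> by_cases hy : y ∈ g.support
      · rw [dif_pos hx, dif_pos hy, Sum.inl.injEq, Subtype.mk.injEq] at hpq
        exact Quotient.sound ((mem_orbit_zpowers_iff_sameCycle g).mpr
          ((sameCycle_iff_cycleOf_eq_of_mem_support hy hx).mpr hpq.symm))
      · rw [dif_pos hx, dif_neg hy] at hpq; cases hpq
      · rw [dif_neg hx, dif_pos hy] at hpq; cases hpq
      · rw [dif_neg hx, dif_neg hy, Sum.inr.injEq, Subtype.mk.injEq] at hpq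
        rw [hpq], by
      rintro (⟨c, hc⟩ | ⟨x, hx⟩)
      · obtain ⟨x, hx⟩ := (mem_cycleFactorsFinset_iff.mp hc).1.nonempty_support
        have hxg : x ∈ g.support := mem_cycleFactorsFinset_support_le hc hx
        refine ⟨Quotient.mk _ x, ?_⟩
        simp only [Quotient.lift_mk, dif_pos hxg, (cycle_is_cycleOf hx hc).symm]
      · exact ⟨Quotient.mk _ x, by simp only [Quotient.lift_mk, dif_neg hx]⟩⟩

lemma cycleCount_add_card_support :
    cycleCount g + #g.support = Fintype.card α + #g.cycleFactorsFinset := by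
  rw [cycleCount, Nat.card_congr (orbitZPowersEquiv g), Nat.card_sum, Nat.card_eq_fintype_card,
    Nat.card_eq_fintype_card, Fintype.card_subtype_compl, Fintype.card_coe, Fintype.card_coe]
  have := Finset.card_le_univ g.support
  omega

lemma sign_eq_neg_one_pow_cycleCount :
    (sign g : ℤ) = (-1) ^ (Fintype.card α + cycleCount g) := by
  rw [sign_of_cycleType, sum_cycleType, cycleType_def, Multiset.card_map, Finset.card_val]
  push_cast
  refine neg_one_pow_congr ?_
  have := cycleCount_add_card_support g
  simp only [Nat.even_iff]
  omega

end CycleCount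

section CharacterSum

variable {K : Type*} [Group K] [Fintype K] (χ : K →* ℤˣ)

lemma sum_coe_hom_units_eq :
    ∑ k, (χ k : ℤ) = if χ = 1 then (Fintype.card K : ℤ) else 0 := by
  have hψ : (Units.coeHom ℤ).comp χ = 1 ↔ χ = 1 := by
    simp only [MonoidHom.ext_iff, MonoidHom.comp_apply, Units.coeHom_apply, MonoidHom.one_apply,
      Units.val_eq_one]
  simpa only [hψ, apply_ite (Nat.cast : ℕ → ℤ), Nat.cast_zero, MonoidHom.comp_apply,
      Units.coeHom_apply]
    using sum_hom_units ((Units.coeHom ℤ).comp χ)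

lemma sum_coe_hom_units_nonneg : 0 ≤ ∑ k, (χ k : ℤ) := by
  rw [sum_coe_hom_units_eq]
  split_ifs <;> positivity

lemma sum_coe_hom_units_eq_zero_iff : ∑ k, (χ k : ℤ) = 0 ↔ ∃ k, χ k = -1 := by
  rw [sum_coe_hom_units_eq]
  split_ifs with hχ
  · simp [hχ, Fintype.card_ne_zero]
  · simp only [true_iff]
    obtain ⟨k, hk⟩ := DFunLike.ne_iff.mp hχ
    exact ⟨k, (Int.units_eq_one_or _).resolve_left hk⟩

end CharacterSum

lemma eq_one_of_smul_eq_of_injective {Ω Y : Type*} {f : Ω → Y} (hf : Function.Injective f)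
    {g : Perm Ω} (hg : g • f = f) : g = 1 :=
  Equiv.ext fun x => hf <| (congrFun hg (g x)).symm.trans (congrArg f (inv_smul_smul g x))

section CyclePoly

variable {Ω : Type*} [Fintype Ω] [DecidableEq Ω] (G : Subgroup (Perm Ω))

lemma neg_one_pow_card_mul_eval_cyclePoly_neg (a : ℕ) :
    (-1) ^ Fintype.card Ω * (cyclePoly G).eval (-(a : ℤ))
      = ∑ g : G, (sign (g : Perm Ω) : ℤ) * a ^ cycleCount (g : Perm Ω) := by
  rw [cyclePoly, eval_finsetSum, Finset.mul_sum]
  refine Finset.sum_congr (congrArg (@Finset.univ _) (Subsingleton.elim _ _)) fun g _ => ?_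
  rw [eval_pow, eval_X, neg_pow, sign_eq_neg_one_pow_cycleCount, pow_add]
  ring

lemma sum_sign_mul_pow_cycleCount_eq_sum_stabilizer (a : ℕ) :
    ∑ g : G, (sign (g : Perm Ω) : ℤ) * a ^ cycleCount (g : Perm Ω)
      = ∑ f : Ω → Fin a, ∑ g : stabilizer G f, (sign (g : Perm Ω) : ℤ) := by
  calc ∑ g : G, (sign (g : Perm Ω) : ℤ) * a ^ cycleCount (g : Perm Ω)
      = ∑ g : G, ∑ f : Ω → Fin a, if g • f = f then (sign (g : Perm Ω) : ℤ) else 0 := by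
        refine Finset.sum_congr rfl fun g _ => ?_
        rw [← Finset.sum_filter, Finset.sum_const, nsmul_eq_mul, mul_comm, ← Nat.cast_pow,
          ← card_fixedBy_colourings, Nat.card_eq_fintype_card, Fintype.card_subtype]
        rfl
    _ = ∑ f : Ω → Fin a, ∑ g : G, if g • f = f then (sign (g : Perm Ω) : ℤ) else 0 :=
        Finset.sum_comm
    _ = ∑ f : Ω → Fin a, ∑ g : stabilizer G f, (sign (g : Perm Ω) : ℤ) := by
        refine Finset.sum_congr rfl fun f _ => ?_
        rw [← Finset.sum_filter]
        exact Finset.sum_subtype _ (by simp [mem_stabilizer_iff]) _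

theorem cyclePoly_eval_neg_eq_zero_iff (a : ℕ) :
    (cyclePoly G).eval (-(a : ℤ)) = 0 ↔ ∀ f : Ω → Fin a, ∃ g ∈ G, g • f = f ∧ sign g = -1 := by
  let χ (f : Ω → Fin a) : stabilizer G f →* ℤˣ := sign.comp (G.subtype.comp (stabilizer G f).subtype)
  rw [← mul_right_inj' (pow_ne_zero (Fintype.card Ω) (neg_ne_zero.mpr one_ne_zero)), mul_zero,
    neg_one_pow_card_mul_eval_cyclePoly_neg, sum_sign_mul_pow_cycleCount_eq_sum_stabilizer]
  refine (Finset.sum_eq_zero_iff_of_nonneg fun f _ => sum_coe_hom_units_nonneg (χ f)).trans ?_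
  refine forall_congr' fun f => (imp_iff_right (Finset.mem_univ f)).trans ?_
  refine (sum_coe_hom_units_eq_zero_iff (χ f)).trans ⟨?_, ?_⟩
  · rintro ⟨⟨⟨g, hG⟩, hf⟩, hg⟩
    exact ⟨g, hG, hf, hg⟩
  · rintro ⟨g, hG, hf, hg⟩
    exact ⟨⟨⟨g, hG⟩, hf⟩, hg⟩

theorem cyclePoly_eval_neg_eq_zero_of_le {a b : ℕ} (hba : b ≤ a)
    (ha : (cyclePoly G).eval (-(a : ℤ)) = 0) : (cyclePoly G).eval (-(b : ℤ)) = 0 := by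
  rw [cyclePoly_eval_neg_eq_zero_iff] at ha ⊢
  intro f
  obtain ⟨g, hG, hf, hg⟩ := ha (Fin.castLE hba ∘ f)
  exact ⟨g, hG, ((Fin.castLE_injective hba).smul_comp_eq_iff g f).mp hf, hg⟩

theorem cyclePoly_eval_neg_one (h : ∃ g ∈ G, sign g = -1) : (cyclePoly G).eval (-1) = 0 := by
  obtain ⟨g, hG, hg⟩ := h
  simpa using (cyclePoly_eval_neg_eq_zero_iff G 1).mpr fun f => ⟨g, hG, Subsingleton.elim _ _, hg⟩

theorem cyclePoly_eval_neg_ne_zero_of_card_le {a : ℕ} (ha : Fintype.card Ω ≤ a) :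
    (cyclePoly G).eval (-(a : ℤ)) ≠ 0 := by
  rw [Ne, cyclePoly_eval_neg_eq_zero_iff]
  intro h
  have hinj : Function.Injective (Fin.castLE ha ∘ Fintype.equivFin Ω) :=
    (Fin.castLE_injective ha).comp (Fintype.equivFin Ω).injective
  obtain ⟨g, -, hf, hg⟩ := h (Fin.castLE ha ∘ Fintype.equivFin Ω)
  rw [eq_one_of_smul_eq_of_injective hinj hf, Perm.sign_one] at hg
  exact absurd hg (by decide)

end CyclePoly

lemma Nat.exists_forall_iff_le_of_antitone {P : ℕ → Prop} (hP : Antitone P) (h1 : P 1) {N : ℕ}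
    (hN : ¬ P N) : ∃ a, 1 ≤ a ∧ ∀ b, P b ↔ b ≤ a := by
  have hex : ∃ m, ¬ P m := ⟨N, hN⟩
  have hlt (b : ℕ) : P b ↔ b < Nat.find hex := by
    rw [Nat.lt_find_iff]
    exact ⟨fun hb m hm => not_not.mpr (hP hm hb), fun h => not_not.mp (h b le_rfl)⟩
  have h1lt := (hlt 1).mp h1
  exact ⟨Nat.find hex - 1, by omega, fun b => by rw [hlt]; omega⟩

theorem cyclePoly_negative_roots_interval {Ω : Type*} [Fintype Ω] [DecidableEq Ω]
    (G : Subgroup (Equiv.Perm Ω))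
    (h : ∃ g ∈ G, Equiv.Perm.sign g = -1) :
    (∀ a : ℕ, 2 ≤ a → (cyclePoly G).eval (-(a : ℤ)) = 0 →
      (cyclePoly G).eval (-((a : ℤ) - 1)) = 0) ∧
    ∃ a : ℕ, 1 ≤ a ∧ ∀ b : ℕ, 1 ≤ b →
      ((cyclePoly G).eval (-(b : ℤ)) = 0 ↔ b ≤ a) := by
  have hanti : Antitone fun b : ℕ => (cyclePoly G).eval (-(b : ℤ)) = 0 :=
    fun _ _ hbc => cyclePoly_eval_neg_eq_zero_of_le G hbc
  have h1 : (cyclePoly G).eval (-((1 : ℕ) : ℤ)) = 0 := by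
    rw [Nat.cast_one]
    exact cyclePoly_eval_neg_one G h
  refine ⟨fun a ha h0 => ?_, ?_⟩
  · have hcast : (a : ℤ) - 1 = ((a - 1 : ℕ) : ℤ) := by omega
    rw [hcast]
    exact hanti (Nat.sub_le a 1) h0
  · obtain ⟨a, ha, hroots⟩ := Nat.exists_forall_iff_le_of_antitone hanti h1
      (cyclePoly_eval_neg_ne_zero_of_card_le G le_rfl)
    exact ⟨a, ha, fun b _ => hroots b⟩
end
end

section
/- For n odd and m > 1, the cycle polynomial of G = S_n ≀ S_m (in its imprimitive action on nm points) satisfies F_G(-a) = 0 for all integers a with 1 ≤ a ≤ n. -/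
/-
The sign of a permutation `g` of `N` points is `(-1) ^ (N - c(g))`, so
`F_W(-a) = (-1) ^ N * ∑_{g ∈ W} sign g * a ^ c(g)`, and `a ^ c(g)` counts the colourings
`f : Ω → Fin a` fixed by `g`. Exchanging the sums,
`F_W(-a) = (-1) ^ N * ∑_f ∑_{g ∈ Stab_W f} sign g`, and each inner sum vanishes as soon as
the stabiliser of `f` contains an odd permutation. In `S_n ≀ S_m` with `a ≤ n` every colouring
has one: a transposition inside a block if some block repeats a colour; otherwise every block
is coloured bijectively, and the swap of two blocks matching equal colours is a product of `n`
transpositions, odd since `n` is odd.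
-/

open Polynomial

open scoped Classical

noncomputable section

/-- The wreath product `G ≀ H` in its imprimitive action on `Ω × Δ`: the subgroup of
permutations of the form `(ω, d) ↦ (f d ω, h d)` with each `f d ∈ G` and `h ∈ H`.
(This set is already closed under the group operations, so it equals its closure.) -/
def wreath {Ω Δ : Type*} [Fintype Ω] [Fintype Δ]
    (G : Subgroup (Equiv.Perm Ω)) (H : Subgroup (Equiv.Perm Δ)) :
    Subgroup (Equiv.Perm (Ω × Δ)) :=
  Subgroup.closure {π : Equiv.Perm (Ω × Δ) | ∃ (f : Δ → Equiv.Perm Ω) (h : Equiv.Perm Δ),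
    (∀ d, f d ∈ G) ∧ h ∈ H ∧ ∀ p : Ω × Δ, π p = (f p.2 p.1, h p.2)}

namespace Equiv.Perm

theorem orbitRel_zpowers_iff_sameCycle {Ω : Type*} (g : Perm Ω) (x y : Ω) :
    MulAction.orbitRel (Subgroup.zpowers g) Ω x y ↔ g.SameCycle x y := by
  rw [MulAction.orbitRel_apply, MulAction.mem_orbit_iff, sameCycle_comm]
  constructor
  · rintro ⟨⟨_, k, rfl⟩, h⟩
    exact ⟨k, h⟩
  · rintro ⟨k, h⟩
    exact ⟨⟨g ^ k, k, rfl⟩, h⟩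

variable {Ω : Type*} [Fintype Ω] [DecidableEq Ω]

def fixedPointOrCycle (g : Perm Ω) (x : Ω) : Function.fixedPoints g ⊕ g.cycleFactorsFinset :=
  if h : g x = x then .inl ⟨x, h⟩
  else .inr ⟨g.cycleOf x, cycleOf_mem_cycleFactorsFinset_iff.2 (mem_support.2 h)⟩

theorem fixedPointOrCycle_eq_iff (g : Perm Ω) (x y : Ω) :
    g.fixedPointOrCycle x = g.fixedPointOrCycle y ↔ g.SameCycle x y := by
  unfold fixedPointOrCycle
  constructor
  · intro h
    split_ifs at h with hx hy hy
    · cases h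
      exact SameCycle.refl g x
    · have hxy : g.cycleOf x = g.cycleOf y := congrArg Subtype.val (Sum.inr_injective h)
      have hy' : y ∈ (g.cycleOf x).support := by
        rw [hxy, mem_support_cycleOf_iff]
        exact ⟨SameCycle.refl g y, mem_support.2 hy⟩
      exact (mem_support_cycleOf_iff.1 hy').1
  · intro h
    by_cases hx : g x = x
    · obtain rfl := h.eq_of_left hx
      rfl
    · have hy : ¬ g y = y := by rwa [← h.apply_eq_self_iff]
      rw [dif_neg hx, dif_neg hy]
      exact congrArg Sum.inr (Subtype.ext h.cycleOf_eq)

theorem fixedPointOrCycle_surjective (g : Perm Ω) : Function.Surjective g.fixedPointOrCycle := by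
  rintro (⟨x, hx⟩ | ⟨c, hc⟩)
  · exact ⟨x, dif_pos hx⟩
  · obtain ⟨x, hx⟩ := (mem_cycleFactorsFinset_iff.1 hc).1.nonempty_support
    have hgx : g x ≠ x := by
      rw [← (mem_cycleFactorsFinset_iff.1 hc).2 x hx]
      exact mem_support.1 hx
    refine ⟨x, ?_⟩
    rw [fixedPointOrCycle, dif_neg hgx]
    exact congrArg Sum.inr (Subtype.ext (cycle_is_cycleOf hx hc).symm)

def orbitsZPowersEquiv (g : Perm Ω) :
    MulAction.orbitRel.Quotient (Subgroup.zpowers g) Ω ≃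
      Function.fixedPoints g ⊕ g.cycleFactorsFinset :=
  (Quotient.congrRight fun x y => (g.orbitRel_zpowers_iff_sameCycle x y).trans
    (g.fixedPointOrCycle_eq_iff x y).symm).trans
    (Setoid.quotientKerEquivOfSurjective _ g.fixedPointOrCycle_surjective)

theorem cycleCount_eq_card_fixedPoints_add_card_cycleType (g : Perm Ω) :
    cycleCount g = Fintype.card (Function.fixedPoints g) + Multiset.card g.cycleType := by
  rw [cycleCount, Nat.card_congr g.orbitsZPowersEquiv, Nat.card_sum, Nat.card_eq_fintype_card,
    Nat.card_eq_fintype_card, Fintype.card_coe, cycleType_def, Multiset.card_map]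
  rfl

theorem neg_one_pow_cycleCount (g : Perm Ω) :
    (-1 : ℤ) ^ cycleCount g = (-1) ^ Fintype.card Ω * sign g := by
  have hsum : g.cycleType.sum + Fintype.card (Function.fixedPoints g) = Fintype.card Ω := by
    rw [card_fixedPoints]
    have := g.sum_cycleType_le
    omega
  rw [sign_of_cycleType, cycleCount_eq_card_fixedPoints_add_card_cycleType, ← hsum]
  push_cast
  rw [← pow_add, add_add_add_comm, ← two_mul, pow_add _ (2 * _), pow_mul, neg_one_sq, one_pow,
    one_mul]

section Colorings

variable {Ω α : Type*}

theorem comp_zpow_eq_of_comp_eq {g : Perm Ω} {f : Ω → α} (hf : f ∘ g = f) (k : ℤ) :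
    f ∘ ⇑(g ^ k) = f := by
  induction k using Int.induction_on with
  | zero => rfl
  | succ k ih => rw [zpow_add_one, coe_mul, ← Function.comp_assoc, ih, hf]
  | pred k ih =>
    rw [zpow_sub_one, coe_mul, ← Function.comp_assoc, ih]
    conv_lhs => rw [← hf]
    rw [Function.comp_assoc, ← coe_mul, mul_inv_cancel, coe_one, Function.comp_id]

theorem comp_eq_iff_orbitRel_le_ker (g : Perm Ω) (f : Ω → α) :
    f ∘ g = f ↔ MulAction.orbitRel (Subgroup.zpowers g) Ω ≤ Setoid.ker f := by
  constructor
  · intro hf x y hxy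
    obtain ⟨k, rfl⟩ := ((g.orbitRel_zpowers_iff_sameCycle x y).1 hxy).symm
    exact congrFun (comp_zpow_eq_of_comp_eq hf k) y
  · intro hf
    funext x
    exact hf ((g.orbitRel_zpowers_iff_sameCycle _ _).2 (SameCycle.refl g x).apply_left)

theorem card_comp_eq_self_eq_pow_cycleCount [Fintype Ω] [Fintype α] (g : Perm Ω) :
    Nat.card {f : Ω → α // f ∘ g = f} = Fintype.card α ^ cycleCount g := by
  rw [Nat.card_congr ((Equiv.subtypeEquivRight (comp_eq_iff_orbitRel_le_ker g)).trans
    (Setoid.liftEquiv _)), Nat.card_fun, Nat.card_eq_fintype_card, cycleCount]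

end Colorings

end Equiv.Perm

theorem Fintype.sum_eq_zero_of_comp_eq_neg {ι M : Type*} [Fintype ι] [AddCommGroup M]
    [IsAddTorsionFree M] {F : ι → M} (e : ι ≃ ι) (hF : ∀ i, F (e i) = -F i) :
    ∑ i, F i = 0 := by
  refine self_eq_neg.1 ?_
  calc ∑ i, F i = ∑ i, F (e i) := (e.sum_comp F).symm
    _ = -∑ i, F i := by simp only [hF, Finset.sum_neg_distrib]

section OddSymmetry

open Equiv Perm

variable {Ω α : Type*} [Fintype Ω] [DecidableEq Ω]

def HasOddSymmetry (W : Subgroup (Perm Ω)) (f : Ω → α) : Prop :=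
  ∃ τ ∈ W, sign τ = -1 ∧ f ∘ τ = f

theorem HasOddSymmetry.sum_sign_stabilizer_eq_zero {W : Subgroup (Perm Ω)} {f : Ω → α}
    (hf : HasOddSymmetry W f) :
    ∑ g : W, (if f ∘ ⇑(g : Perm Ω) = f then (sign (g : Perm Ω) : ℤ) else 0) = 0 := by
  obtain ⟨τ, hτW, hτ, hfτ⟩ := hf
  refine Fintype.sum_eq_zero_of_comp_eq_neg (Equiv.mulLeft ⟨τ, hτW⟩) fun g => ?_
  have hcomp : f ∘ ⇑(τ * g) = f ∘ ⇑(g : Perm Ω) := by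
    rw [coe_mul, ← Function.comp_assoc, hfτ]
  simp only [Equiv.coe_mulLeft, Subgroup.coe_mul, hcomp, map_mul, hτ]
  split_ifs <;> simp

theorem cyclePoly_eval_neg_card [Fintype α] (W : Subgroup (Perm Ω)) :
    (cyclePoly W).eval (-(Fintype.card α : ℤ)) = (-1) ^ Fintype.card Ω *
      ∑ f : Ω → α, ∑ g : W,
        if f ∘ ⇑(g : Perm Ω) = f then (sign (g : Perm Ω) : ℤ) else 0 := by
  have hterm (g : Perm Ω) : (-(Fintype.card α : ℤ)) ^ cycleCount g =
      (-1) ^ Fintype.card Ω * ∑ f : Ω → α, if f ∘ ⇑g = f then (sign g : ℤ) else 0 := by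
    rw [Finset.sum_ite, Finset.sum_const_zero, add_zero, Finset.sum_const, ← Fintype.card_subtype,
      ← Nat.card_eq_fintype_card (α := {f : Ω → α // f ∘ ⇑g = f}),
      card_comp_eq_self_eq_pow_cycleCount, neg_eq_neg_one_mul, mul_pow, neg_one_pow_cycleCount]
    ring
  simp only [cyclePoly, eval_finsetSum, eval_pow, eval_X, hterm, ← Finset.mul_sum]
  rw [Finset.sum_comm]
  -- `cyclePoly` sums over `W` using the classical `DecidableEq Ω`, not the one in context
  congr!

theorem cyclePoly_eval_neg_card_eq_zero [Fintype α] {W : Subgroup (Perm Ω)}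
    (hW : ∀ f : Ω → α, HasOddSymmetry W f) :
    (cyclePoly W).eval (-(Fintype.card α : ℤ)) = 0 := by
  rw [cyclePoly_eval_neg_card, Finset.sum_eq_zero fun f _ => (hW f).sum_sign_stabilizer_eq_zero,
    mul_zero]

end OddSymmetry

section Wreath

open Equiv Perm

variable {Ω Δ α : Type*} [Fintype Ω] [Fintype Δ]

theorem prodCongrRight_mul_prodCongrLeft_mem_wreath {G : Subgroup (Perm Ω)}
    {H : Subgroup (Perm Δ)} {v : Δ → Perm Ω} (hv : ∀ d, v d ∈ G) {s : Perm Δ}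
    (hs : s ∈ H) :
    (prodCongrRight (fun _ => s) * prodCongrLeft v : Perm (Ω × Δ)) ∈ wreath G H :=
  Subgroup.subset_closure ⟨v, s, hv, hs, fun _ => rfl⟩

variable [DecidableEq Ω] [DecidableEq Δ]

theorem sign_prodCongrRight_mul_prodCongrLeft (v : Δ → Perm Ω) (s : Perm Δ) :
    sign (prodCongrRight (fun _ => s) * prodCongrLeft v : Perm (Ω × Δ)) =
      sign s ^ Fintype.card Ω * ∏ d, sign (v d) := by
  rw [map_mul, sign_prodCongrRight, sign_prodCongrLeft, Finset.prod_const, Finset.card_univ]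

theorem prod_sign_mulSingle (d : Δ) (σ : Perm Ω) :
    ∏ e, sign ((Pi.mulSingle d σ : Δ → Perm Ω) e) = sign σ := by
  simp [Pi.mulSingle_apply, apply_ite sign]

theorem hasOddSymmetry_wreath_of_not_injective (H : Subgroup (Perm Δ)) {f : Ω × Δ → α}
    {d : Δ} (hd : ¬ Function.Injective fun x => f (x, d)) :
    HasOddSymmetry (wreath ⊤ H) f := by
  obtain ⟨x, y, hfxy, hxy⟩ := Function.not_injective_iff.1 hd
  refine ⟨_, prodCongrRight_mul_prodCongrLeft_mem_wreath (v := Pi.mulSingle d (swap x y))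
    (fun _ => Subgroup.mem_top _) H.one_mem, ?_, ?_⟩
  · rw [sign_prodCongrRight_mul_prodCongrLeft, prod_sign_mulSingle, sign_swap hxy, map_one,
      one_pow, one_mul]
  · funext ⟨z, e⟩
    simp only [Function.comp_apply, Perm.coe_mul, prodCongrLeft_apply, prodCongrRight_apply,
      Perm.one_apply, Pi.mulSingle_apply]
    split_ifs with he
    · subst he
      rcases eq_or_ne z x with rfl | hzx
      · rw [swap_apply_left, hfxy]
      rcases eq_or_ne z y with rfl | hzy
      · rw [swap_apply_right, hfxy]
      rw [swap_apply_of_ne_of_ne hzx hzy]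
    · rfl

theorem hasOddSymmetry_wreath_of_bijective (hΩ : Odd (Fintype.card Ω)) {f : Ω × Δ → α}
    {d₁ d₂ : Δ} (hd : d₁ ≠ d₂) (h₁ : Function.Bijective fun x => f (x, d₁))
    (h₂ : Function.Bijective fun x => f (x, d₂)) :
    HasOddSymmetry (wreath ⊤ ⊤) f := by
  set σ : Perm Ω := (Equiv.ofBijective _ h₁).trans (Equiv.ofBijective _ h₂).symm
  have hσ (x : Ω) : f (σ x, d₂) = f (x, d₁) := (Equiv.ofBijective _ h₂).apply_symm_apply _
  refine ⟨_, prodCongrRight_mul_prodCongrLeft_mem_wreath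
    (v := Pi.mulSingle d₁ σ * Pi.mulSingle d₂ σ⁻¹) (s := swap d₁ d₂)
    (fun _ => Subgroup.mem_top _) (Subgroup.mem_top _), ?_, ?_⟩
  · rw [sign_prodCongrRight_mul_prodCongrLeft, sign_swap hd, hΩ.neg_one_pow]
    simp only [Pi.mul_apply, map_mul, Finset.prod_mul_distrib, prod_sign_mulSingle, map_inv,
      mul_inv_cancel, mul_one]
  · funext ⟨x, e⟩
    simp only [Function.comp_apply, Perm.coe_mul, prodCongrLeft_apply, prodCongrRight_apply,
      Pi.mul_apply, Pi.mulSingle_apply]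
    rcases eq_or_ne e d₁ with rfl | he₁
    · simp [hd, hσ]
    rcases eq_or_ne e d₂ with rfl | he₂
    · simpa [he₁] using (hσ (σ⁻¹ x)).symm
    · simp [he₁, he₂, swap_apply_of_ne_of_ne he₁ he₂]

theorem hasOddSymmetry_wreath_top_top [Nontrivial Δ] [Fintype α] (hΩ : Odd (Fintype.card Ω))
    (hα : Fintype.card α ≤ Fintype.card Ω) (f : Ω × Δ → α) :
    HasOddSymmetry (wreath ⊤ ⊤) f := by
  by_cases hinj : ∀ d, Function.Injective fun x => f (x, d)
  · obtain ⟨d₁, d₂, hd⟩ := exists_pair_ne Δ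
    have hbij (d : Δ) : Function.Bijective fun x => f (x, d) :=
      (Fintype.bijective_iff_injective_and_card _).2
        ⟨hinj d, le_antisymm (Fintype.card_le_of_injective _ (hinj d)) hα⟩
    exact hasOddSymmetry_wreath_of_bijective hΩ hd (hbij d₁) (hbij d₂)
  · obtain ⟨d, hd⟩ := not_forall.1 hinj
    exact hasOddSymmetry_wreath_of_not_injective ⊤ hd

end Wreath

theorem cyclePoly_wreath_symm_roots (n m : ℕ) (hn : Odd n) (hm : 1 < m) :
    ∀ a : ℕ, 1 ≤ a → a ≤ n →
      (cyclePoly (wreath (⊤ : Subgroup (Equiv.Perm (Fin n)))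
          (⊤ : Subgroup (Equiv.Perm (Fin m))))).eval (-(a : ℤ)) = 0 := by
  intro a _ ha
  have : Nontrivial (Fin m) := Fin.nontrivial_iff_two_le.2 hm
  simpa using cyclePoly_eval_neg_card_eq_zero (α := Fin a)
    (hasOddSymmetry_wreath_top_top (by simpa using hn) (by simpa using ha))
end
end

section
/- Let Γ be the star K_{1,2k} on n = 2k+1 vertices and let G satisfy (C_2)^k ≤ G ≤ C_2 ≀ S_k, where the transpositions generating (C_2)^k swap the two leaves in each of the k pairs. Then (Γ,G) is a reciprocal pair: P_{Γ,G}(x) = (-1)^n F_G(-x). Moreover P_{Γ,G}(x) = (x/(x-1)) F_G(x-1), so the reciprocity is equivalent to the identity x(F_G(x-1) + F_G(-x)) = F_G(-x). -/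
open Polynomial

open scoped Classical

noncomputable section

/-- The number of proper `a`-colourings of the graph `Γ` fixed by the permutation `g`;
this is the evaluation at `a` of the chromatic polynomial of the contracted graph `Γ/g`. -/
def fixedProperColorings {Ω : Type*} [Fintype Ω] (Γ : SimpleGraph Ω)
    (g : Equiv.Perm Ω) (a : ℕ) : ℕ :=
  Nat.card {f : Ω → Fin a // (∀ v w, Γ.Adj v w → f v ≠ f w) ∧ ∀ v, f (g v) = f v}

/-- `p` is the orbital chromatic polynomial of the pair `(Γ, G)`: its value at every
natural number `a` is `∑_{g ∈ G} P_{Γ/g}(a)`, the number of proper `a`-colourings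
fixed by `g`, summed over `g ∈ G`. -/
def IsOrbitalChromaticPoly {Ω : Type*} [Fintype Ω] (Γ : SimpleGraph Ω)
    (G : Subgroup (Equiv.Perm Ω)) (p : Polynomial ℤ) : Prop :=
  ∀ a : ℕ, p.eval (a : ℤ) = ∑ g : G, (fixedProperColorings Γ (g : Equiv.Perm Ω) a : ℤ)
/-- The star `K_{1,2k}`: centre `none`, and `2k` leaves `some (i, b)` grouped in `k` pairs;
edges join the centre to each leaf. -/
def starGraph (k : ℕ) : SimpleGraph (Option (Fin k × Bool)) where
  Adj v w := ¬ (v = none ↔ w = none)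
  symm := ⟨fun v w h h' => h h'.symm⟩
  loopless := ⟨fun v h => h Iff.rfl⟩

/-- `(C_2)^k`: the subgroup generated by the `k` transpositions swapping the two leaves
in each pair. -/
def basePairSwaps (k : ℕ) : Subgroup (Equiv.Perm (Option (Fin k × Bool))) :=
  Subgroup.closure
    {π | ∃ i : Fin k, π = Equiv.swap (some (i, false)) (some (i, true))}

/-- `C_2 ≀ S_k`: the subgroup of permutations fixing the centre and permuting the `k`
pairs of leaves, possibly swapping the leaves within pairs.  (This set is already a
subgroup, so it equals its closure.) -/
def wreathC2Sk (k : ℕ) : Subgroup (Equiv.Perm (Option (Fin k × Bool))) :=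
  Subgroup.closure
    {π | ∃ (σ : Equiv.Perm (Fin k)) (f : Fin k → Equiv.Perm Bool),
      π none = none ∧ ∀ (i : Fin k) (b : Bool), π (some (i, b)) = some (σ i, f i b)}


/-!
Every `g ∈ C₂ ≀ S_k` fixes the centre, so `c(g) = 1 + c'(g)` with `c'(g)` the number of cycles
on the leaves, and a `g`-fixed proper colouring of the star is a centre colour together with a
`g`-invariant colouring of the leaves avoiding it: `P_{Γ/g}(a) = a (a - 1)^{c'(g)}`. This gives
`(x - 1) P_{Γ,G}(x) = x F_G(x - 1)`, and reciprocity reduces to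
`∑_{g ∈ G} (a - 1)^{c'(g)} = ∑_{g ∈ G} (-a)^{c'(g)}`.

As `(C₂)^k ≤ G`, the group `G` is a union of cosets `σ (C₂)^k`. On one coset, a twisted
Burnside lemma counts the pairs (element of the coset, invariant colouring of the leaves with
`u` colours) as `2^k N^{c(σ)}`, where `N = u (u + 1) / 2` is the number of orbits of `C₂` on
ordered pairs of colours. So `∑_{g ∈ σ (C₂)^k} u^{c'(g)} = 2^{k - c(σ)} (u (u + 1))^{c(σ)}` is a
polynomial in `u (u + 1)`, which takes the same value at `u = a - 1` and at `u = -a`.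
-/

open MulAction Polynomial

lemma Polynomial.eq_of_eval_natCast_eq {R : Type*} [CommRing R] [IsDomain R] [CharZero R]
    {p q : R[X]} (h : ∀ n : ℕ, p.eval (n : R) = q.eval (n : R)) : p = q :=
  eq_of_infinite_eval_eq p q <| (Set.infinite_range_of_injective Nat.cast_injective).mono <| by
    rintro _ ⟨n, rfl⟩
    exact h n

section InvariantFunctions

variable {α X : Type*}

lemma apply_zpow_apply_of_invariant {e : Equiv.Perm α} {f : α → X}
    (hf : ∀ v, f (e v) = f v) (z : ℤ) (v : α) : f ((e ^ z) v) = f v := by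
  induction z using Int.induction_on generalizing v with
  | zero => rfl
  | succ n ih => rw [zpow_add_one, Equiv.Perm.mul_apply, ih, hf]
  | pred n ih =>
    rw [sub_eq_add_neg, zpow_add, zpow_neg_one, Equiv.Perm.mul_apply, ih, ← hf,
      Equiv.Perm.coe_inv, Equiv.apply_symm_apply]

def invariantFunEquiv (e : Equiv.Perm α) :
    {f : α → X // ∀ v, f (e v) = f v} ≃ (orbitRel.Quotient (Subgroup.zpowers e) α → X) where
  toFun f := Quotient.lift f.1 <| by
    rintro a b ⟨⟨g, hg⟩, rfl⟩
    obtain ⟨z, rfl⟩ := Subgroup.mem_zpowers_iff.mp hg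
    exact apply_zpow_apply_of_invariant f.2 z b
  invFun F := ⟨fun v => F (Quotient.mk _ v), fun v =>
    congrArg F (Quotient.sound ⟨⟨e, Subgroup.mem_zpowers e⟩, rfl⟩)⟩
  left_inv _ := rfl
  right_inv F := funext fun q => Quotient.inductionOn q fun _ => rfl

def invariantOptionEquiv (e : Equiv.Perm α) :
    {f : Option α → X // ∀ v, f (e.optionCongr v) = f v} ≃
      X × {g : α → X // ∀ a, g (e a) = g a} where
  toFun f := (f.1 none, ⟨f.1 ∘ some, fun a => f.2 (some a)⟩)
  invFun p := ⟨fun v => v.elim p.1 p.2.1, by rintro (_ | a); exacts [rfl, p.2.2 a]⟩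
  left_inv f := by ext (_ | a) <;> rfl
  right_inv _ := rfl

variable [Fintype α]

lemma card_invariant_fun (e : Equiv.Perm α) :
    Nat.card {f : α → X // ∀ v, f (e v) = f v} = Nat.card X ^ cycleCount e := by
  rw [Nat.card_congr (invariantFunEquiv e), Nat.card_fun, cycleCount]

lemma cycleCount_optionCongr (e : Equiv.Perm α) :
    cycleCount e.optionCongr = cycleCount e + 1 := by
  have h := Nat.card_congr (invariantOptionEquiv (X := Bool) e)
  rw [card_invariant_fun, Nat.card_prod, card_invariant_fun, Nat.card_eq_fintype_card,
    Fintype.card_bool, ← pow_succ'] at h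
  exact Nat.pow_right_injective le_rfl h

end InvariantFunctions

section TwistedBurnside

variable {H ι Y : Type*} [Group H] [MulAction H Y]

variable (H) in
def transporterCard [Fintype H] (y y' : Y) : ℕ := Nat.card {h : H // h • y = y'}

lemma transporterCard_eq_zero_of_ne [Fintype H] {y y' : Y}
    (h : (Quotient.mk'' y : orbitRel.Quotient H Y) ≠ Quotient.mk'' y') :
    transporterCard H y y' = 0 := by
  rw [transporterCard, Nat.card_eq_zero]
  left
  exact ⟨fun ⟨g, hg⟩ => h (Quotient.sound (s := orbitRel H Y) (orbitRel_apply.mpr ⟨g, hg⟩)).symm⟩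

lemma transporterCard_eq_of_mk_eq [Fintype H] {y y' : Y}
    (h : (Quotient.mk'' y : orbitRel.Quotient H Y) = Quotient.mk'' y') :
    transporterCard H y y' = transporterCard H y' y' := by
  obtain ⟨g, rfl⟩ := Quotient.exact h.symm
  refine Nat.card_congr (Equiv.subtypeEquiv (Equiv.mulRight g⁻¹) fun h => ?_)
  simp [mul_smul]

lemma sum_transporterCard [Fintype H] [Fintype Y] (y : Y) :
    ∑ y', transporterCard H y y' = Fintype.card H := by
  simp only [transporterCard, Nat.card_eq_fintype_card]
  rw [← Fintype.card_sigma]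
  exact Fintype.card_congr (Equiv.sigmaFiberEquiv (· • y))

lemma sum_transporterCard_self_orbit [Fintype H] [Fintype Y] (q : orbitRel.Quotient H Y) :
    ∑ y with (Quotient.mk'' y : orbitRel.Quotient H Y) = q, transporterCard H y y =
      Fintype.card H := by
  obtain ⟨y₀, rfl⟩ := Quotient.exists_rep q
  calc ∑ y with (Quotient.mk'' y : orbitRel.Quotient H Y) = ⟦y₀⟧, transporterCard H y y
      = ∑ y with (Quotient.mk'' y : orbitRel.Quotient H Y) = ⟦y₀⟧, transporterCard H y₀ y :=
        Finset.sum_congr rfl fun y hy =>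
          (transporterCard_eq_of_mk_eq (Finset.mem_filter.mp hy).2.symm).symm
    _ = ∑ y, transporterCard H y₀ y :=
        Finset.sum_filter_of_ne fun y _ hy => by
          by_contra hne
          exact hy (transporterCard_eq_zero_of_ne fun h => hne h.symm)
    _ = Fintype.card H := sum_transporterCard y₀

def twistedInvariantSigmaEquiv (σ : Equiv.Perm ι) :
    (Σ ε : ι → H, {φ : ι → Y // ∀ i, ε i • φ i = φ (σ i)}) ≃
      Σ φ : ι → Y, ∀ i, {h : H // h • φ i = φ (σ i)} where
  toFun x := ⟨x.2.1, fun i => ⟨x.1 i, x.2.2 i⟩⟩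
  invFun x := ⟨fun i => (x.2 i).1, x.1, fun i => (x.2 i).2⟩
  left_inv _ := rfl
  right_inv _ := rfl

variable [Fintype ι] [Fintype H]

lemma prod_transporterCard_eq (σ : Equiv.Perm ι) (φ : ι → Y) :
    ∏ i, transporterCard H (φ i) (φ (σ i)) =
      if ∀ i, (Quotient.mk'' (φ (σ i)) : orbitRel.Quotient H Y) = Quotient.mk'' (φ i) then
        ∏ i, transporterCard H (φ i) (φ i) else 0 := by
  split_ifs with h
  · rw [← Equiv.prod_comp σ fun i => transporterCard H (φ i) (φ i)]
    exact Finset.prod_congr rfl fun i _ => transporterCard_eq_of_mk_eq (h i).symm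
  · obtain ⟨i, hi⟩ := not_forall.mp h
    exact Finset.prod_eq_zero (Finset.mem_univ i) (transporterCard_eq_zero_of_ne (Ne.symm hi))

variable [DecidableEq ι] [Fintype Y]

lemma sum_prod_transporterCard_fiber (ψ : ι → orbitRel.Quotient H Y) :
    ∑ φ : ι → Y with (fun i => (Quotient.mk'' (φ i) : orbitRel.Quotient H Y)) = ψ,
      ∏ i, transporterCard H (φ i) (φ i) = Fintype.card H ^ Fintype.card ι := by
  have hfiber : ({φ : ι → Y | (fun i => (Quotient.mk'' (φ i) : orbitRel.Quotient H Y)) = ψ} :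
      Finset (ι → Y)) = Fintype.piFinset fun i => {y | Quotient.mk'' y = ψ i} := by
    ext φ
    simp [Fintype.mem_piFinset, funext_iff]
  rw [hfiber, ← Finset.prod_univ_sum (fun i => ({y | Quotient.mk'' y = ψ i} : Finset Y))
    fun _ y => transporterCard H y y]
  simp [sum_transporterCard_self_orbit]

/- Summing over `φ` first, the twists `ε` compatible with `φ` are chosen independently at each
`i`; grouping the `φ` by their orbit pattern `ψ`, orbit–stabiliser turns each fibre into
`|H|^|ι|`. -/
theorem sum_card_twisted_invariant (σ : Equiv.Perm ι) :
    ∑ ε : ι → H, Nat.card {φ : ι → Y // ∀ i, ε i • φ i = φ (σ i)} =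
      Nat.card {ψ : ι → orbitRel.Quotient H Y // ∀ i, ψ (σ i) = ψ i} *
        Fintype.card H ^ Fintype.card ι := by
  calc _ = ∑ φ : ι → Y, ∏ i, transporterCard H (φ i) (φ (σ i)) := by
          rw [← Nat.card_sigma, Nat.card_congr (twistedInvariantSigmaEquiv σ), Nat.card_sigma]
          simp only [Nat.card_pi, transporterCard]
    _ = ∑ ψ : ι → orbitRel.Quotient H Y,
          if ∀ i, ψ (σ i) = ψ i then Fintype.card H ^ Fintype.card ι else 0 := by
          rw [← Finset.sum_fiberwise Finset.univ
            fun φ i => (Quotient.mk'' (φ i) : orbitRel.Quotient H Y)]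
          refine Finset.sum_congr rfl fun ψ _ => ?_
          split_ifs with hψ
          · rw [← sum_prod_transporterCard_fiber ψ]
            refine Finset.sum_congr rfl fun φ hφ => ?_
            obtain rfl := (Finset.mem_filter.mp hφ).2
            exact (prod_transporterCard_eq σ φ).trans (if_pos hψ)
          · refine Finset.sum_eq_zero fun φ hφ => ?_
            obtain rfl := (Finset.mem_filter.mp hφ).2
            exact (prod_transporterCard_eq σ φ).trans (if_neg hψ)
    _ = _ := by
          rw [Finset.sum_ite, Finset.sum_const_zero, add_zero, Finset.sum_const, smul_eq_mul,
            Nat.card_eq_fintype_card, Fintype.card_subtype]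

end TwistedBurnside

section Shear

attribute [local instance] arrowAction

variable {α β X : Type*}

def prodShearInvariantEquiv (σ : Equiv.Perm α) (ε : α → Equiv.Perm β) :
    {f : α × β → X // ∀ v, f (σ.prodShear ε v) = f v} ≃
      {φ : α → β → X // ∀ i, ε i • φ i = φ (σ i)} :=
  Equiv.subtypeEquiv (Equiv.curry α β X) fun f => by
    constructor
    · intro h i
      funext b
      show f (i, (ε i)⁻¹ b) = f (σ i, b)
      simpa using (h (i, (ε i)⁻¹ b)).symm
    · rintro h ⟨i, b⟩
      have h' : f (i, (ε i)⁻¹ (ε i b)) = f (σ i, ε i b) := congrFun (h i) (ε i b)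
      simpa using h'.symm

lemma sum_pow_cycleCount_prodShear [Fintype α] [DecidableEq α] [Fintype β] [DecidableEq β]
    (σ : Equiv.Perm α) (u : ℕ) :
    ∑ ε : α → Equiv.Perm β, u ^ cycleCount (σ.prodShear ε) =
      Nat.card (orbitRel.Quotient (Equiv.Perm β) (β → Fin u)) ^ cycleCount σ *
        Fintype.card (Equiv.Perm β) ^ Fintype.card α := by
  have hu : ∀ e : Equiv.Perm (α × β),
      u ^ cycleCount e = Nat.card {f : α × β → Fin u // ∀ v, f (e v) = f v} := fun e => by
    rw [card_invariant_fun, Nat.card_eq_fintype_card, Fintype.card_fin]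
  simp only [hu, Nat.card_congr (prodShearInvariantEquiv σ _)]
  rw [sum_card_twisted_invariant, card_invariant_fun]

variable (X) [Fintype X]

def fixedBySwapEquiv : fixedBy (Bool → X) (Equiv.swap false true) ≃ X where
  toFun p := p.1 false
  invFun x := ⟨fun _ => x, rfl⟩
  left_inv p := by
    ext b
    cases b
    · rfl
    · exact congrFun p.2 true
  right_inv _ := rfl

lemma two_mul_card_orbits_boolFun :
    2 * Nat.card (orbitRel.Quotient (Equiv.Perm Bool) (Bool → X)) =
      Fintype.card X * (Fintype.card X + 1) := by
  have burnside := sum_card_fixedBy_eq_card_orbits_mul_card_group (Equiv.Perm Bool) (Bool → X)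
  have huniv : (Finset.univ : Finset (Equiv.Perm Bool)) = {1, Equiv.swap false true} := by
    decide
  have hone : Fintype.card (fixedBy (Bool → X) (1 : Equiv.Perm Bool)) = Fintype.card X ^ 2 := by
    simp [fixedBy_one_eq_univ]
  rw [huniv, Finset.sum_pair (by decide), hone, Fintype.card_congr (fixedBySwapEquiv X),
    Fintype.card_perm, Fintype.card_bool, Nat.factorial_two] at burnside
  rw [Nat.card_eq_fintype_card]
  linarith

end Shear

section ShearBool

variable {α : Type*} [Fintype α] [DecidableEq α]

lemma two_pow_mul_sum_pow_cycleCount_prodShear (σ : Equiv.Perm α) (u : ℤ) :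
    2 ^ cycleCount σ * ∑ ε : α → Equiv.Perm Bool, u ^ cycleCount (σ.prodShear ε) =
      (u * (u + 1)) ^ cycleCount σ * 2 ^ Fintype.card α := by
  suffices hpoly : (2 : ℤ[X]) ^ cycleCount σ *
      ∑ ε : α → Equiv.Perm Bool, X ^ cycleCount (σ.prodShear ε) =
        (X * (X + 1)) ^ cycleCount σ * 2 ^ Fintype.card α by
    simpa [eval_finsetSum] using congrArg (eval u) hpoly
  refine eq_of_eval_natCast_eq fun n => ?_
  have hnat := two_mul_card_orbits_boolFun (Fin n)
  simp only [Fintype.card_fin] at hnat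
  simp only [eval_mul, eval_pow, eval_finsetSum, eval_X, eval_add, eval_one, eval_ofNat]
  exact_mod_cast by
    rw [sum_pow_cycleCount_prodShear, Fintype.card_perm, Fintype.card_bool, Nat.factorial_two,
      ← hnat]
    ring

lemma sum_pow_cycleCount_prodShear_eq {u v : ℤ} (huv : u * (u + 1) = v * (v + 1))
    (σ : Equiv.Perm α) :
    ∑ ε : α → Equiv.Perm Bool, u ^ cycleCount (σ.prodShear ε) =
      ∑ ε : α → Equiv.Perm Bool, v ^ cycleCount (σ.prodShear ε) := by
  refine mul_left_cancel₀ (pow_ne_zero (cycleCount σ) two_ne_zero) ?_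
  rw [two_pow_mul_sum_pow_cycleCount_prodShear, two_pow_mul_sum_pow_cycleCount_prodShear, huv]

end ShearBool

section Wreath

variable {α β : Type*}

def wreathPerm (σ : Equiv.Perm α) (ε : α → Equiv.Perm β) : Equiv.Perm (Option (α × β)) :=
  (σ.prodShear ε).optionCongr

@[simp]
lemma wreathPerm_none (σ : Equiv.Perm α) (ε : α → Equiv.Perm β) : wreathPerm σ ε none = none :=
  rfl

@[simp]
lemma wreathPerm_some (σ : Equiv.Perm α) (ε : α → Equiv.Perm β) (i : α) (b : β) :
    wreathPerm σ ε (some (i, b)) = some (σ i, ε i b) :=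
  rfl

lemma wreathPerm_mul (σ σ' : Equiv.Perm α) (ε ε' : α → Equiv.Perm β) :
    wreathPerm σ ε * wreathPerm σ' ε' = wreathPerm (σ * σ') fun i => ε (σ' i) * ε' i := by
  ext (_ | ⟨i, b⟩) <;> simp

lemma wreathPerm_one : wreathPerm (1 : Equiv.Perm α) (1 : α → Equiv.Perm β) = 1 := by
  ext (_ | ⟨i, b⟩) <;> simp

lemma wreathPerm_inv (σ : Equiv.Perm α) (ε : α → Equiv.Perm β) :
    (wreathPerm σ ε)⁻¹ = wreathPerm σ⁻¹ fun i => (ε (σ⁻¹ i))⁻¹ := by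
  refine inv_eq_of_mul_eq_one_right ?_
  rw [wreathPerm_mul, ← wreathPerm_one]
  congr 1
  · exact mul_inv_cancel σ
  · funext i
    simp

def wreathSubgroup (α β : Type*) : Subgroup (Equiv.Perm (Option (α × β))) where
  carrier := {g | ∃ σ ε, wreathPerm σ ε = g}
  one_mem' := ⟨1, 1, wreathPerm_one⟩
  mul_mem' := by
    rintro _ _ ⟨σ, ε, rfl⟩ ⟨σ', ε', rfl⟩
    exact ⟨_, _, (wreathPerm_mul σ σ' ε ε').symm⟩
  inv_mem' := by
    rintro _ ⟨σ, ε, rfl⟩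
    exact ⟨_, _, (wreathPerm_inv σ ε).symm⟩

def twistHom : (α → Equiv.Perm β) →* Equiv.Perm (Option (α × β)) where
  toFun := wreathPerm 1
  map_one' := wreathPerm_one
  map_mul' ε ε' := by rw [wreathPerm_mul]; rfl

lemma sum_wreathPerm_mul_twistHom {M : Type*} [AddCommMonoid M] [Fintype α] [DecidableEq α]
    [Fintype β] [DecidableEq β] (σ : Equiv.Perm α) (ε₀ : α → Equiv.Perm β)
    (T : Equiv.Perm (Option (α × β)) → M) :
    ∑ δ, T (wreathPerm σ ε₀ * twistHom δ) = ∑ ε, T (wreathPerm σ ε) :=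
  Fintype.sum_equiv (Equiv.mulLeft ε₀) _ _ fun δ => by
    rw [twistHom, MonoidHom.coe_mk, OneHom.coe_mk, wreathPerm_mul, mul_one]
    rfl

lemma cycleCount_wreathPerm [Fintype α] [Fintype β] (σ : Equiv.Perm α) (ε : α → Equiv.Perm β) :
    cycleCount (wreathPerm σ ε) = cycleCount (σ.prodShear ε) + 1 :=
  cycleCount_optionCongr _

end Wreath

lemma Subgroup.card_nsmul_sum_eq_sum_sum_mul {M R ι : Type*} [Group M] [AddCommMonoid R]
    [Fintype ι] (G : Subgroup M) [Fintype G] (t : ι → M) (ht : ∀ i, t i ∈ G) (T : M → R) :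
    Fintype.card ι • ∑ g : G, T g = ∑ g : G, ∑ i, T (g * t i) := by
  rw [Finset.sum_comm, ← Finset.card_univ, ← Finset.sum_const]
  exact Finset.sum_congr rfl fun i _ =>
    (Fintype.sum_equiv (Equiv.mulRight (⟨t i, ht i⟩ : G)) _ _ fun _ => rfl).symm

lemma cyclePoly_eval {Ω : Type*} [Fintype Ω] (G : Subgroup (Equiv.Perm Ω)) (y : ℤ) :
    (cyclePoly G).eval y = ∑ g : G, y ^ cycleCount (g : Equiv.Perm Ω) := by
  simp [cyclePoly, eval_finsetSum]

section PairedStar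

variable {k : ℕ}

def starColoringEquiv (e : Equiv.Perm (Fin k × Bool)) (a : ℕ) :
    {f : Option (Fin k × Bool) → Fin a //
        (∀ v w, (starGraph k).Adj v w → f v ≠ f w) ∧ ∀ v, f (e.optionCongr v) = f v} ≃
      Σ c : Fin a, {g : Fin k × Bool → {y // y ≠ c} // ∀ x, g (e x) = g x} where
  toFun f := ⟨f.1 none, fun x => ⟨f.1 (some x), f.2.1 _ _ (by simp [starGraph])⟩,
    fun x => Subtype.ext (f.2.2 (some x))⟩
  invFun g := ⟨fun v => v.elim g.1 fun x => g.2.1 x, by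
    refine ⟨?_, ?_⟩
    · rintro (_ | x) (_ | y) h <;> simp_all [starGraph, (g.2.1 _).2, Ne.symm (g.2.1 _).2]
    · rintro (_ | x)
      exacts [rfl, congrArg Subtype.val (g.2.2 x)]⟩
  left_inv f := by ext (_ | x) <;> rfl
  right_inv _ := rfl

lemma fixedProperColorings_starGraph (e : Equiv.Perm (Fin k × Bool)) (a : ℕ) :
    fixedProperColorings (starGraph k) e.optionCongr a = a * (a - 1) ^ cycleCount e := by
  rw [fixedProperColorings, Nat.card_congr (starColoringEquiv e a), Nat.card_sigma]
  have hc : ∀ c : Fin a, Nat.card {y // y ≠ c} = a - 1 := fun c => by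
    rw [Nat.card_eq_fintype_card, Fintype.card_subtype_compl, Fintype.card_fin,
      Fintype.card_unique]
  simp only [card_invariant_fun, hc, Finset.sum_const, Finset.card_univ, Fintype.card_fin,
    smul_eq_mul]

lemma exists_wreathPerm_of_mem_wreathC2Sk {g : Equiv.Perm (Option (Fin k × Bool))}
    (hg : g ∈ wreathC2Sk k) : ∃ σ ε, wreathPerm σ ε = g := by
  refine (Subgroup.closure_le (K := wreathSubgroup (Fin k) Bool)).mpr ?_ hg
  rintro π ⟨σ, ε, hnone, hsome⟩
  exact ⟨σ, ε, by ext (_ | ⟨i, b⟩) <;> simp [hnone, hsome]⟩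

lemma twistHom_mem_basePairSwaps (δ : Fin k → Equiv.Perm Bool) :
    twistHom δ ∈ basePairSwaps k := by
  refine Subgroup.pi_mem_of_mulSingle_mem (H := (basePairSwaps k).comap twistHom) δ fun i => ?_
  have hBool : ∀ h : Equiv.Perm Bool, h = 1 ∨ h = Equiv.swap false true := by decide
  obtain h | h := hBool (δ i)
  · rw [h, Pi.mulSingle_one]
    exact one_mem _
  · refine Subgroup.subset_closure ⟨i, ?_⟩
    rw [h]
    refine Equiv.ext ?_
    rintro (_ | ⟨j, b⟩)
    · simp [twistHom, Equiv.swap_apply_of_ne_of_ne]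
    · by_cases hji : j = i
      · subst hji
        cases b <;> simp [twistHom]
      · simp [twistHom, hji, Equiv.swap_apply_of_ne_of_ne]

lemma sub_one_mul_fixedProperColorings_starGraph {g : Equiv.Perm (Option (Fin k × Bool))}
    (hg : g ∈ wreathC2Sk k) (a : ℕ) :
    ((a : ℤ) - 1) * fixedProperColorings (starGraph k) g a = a * ((a : ℤ) - 1) ^ cycleCount g := by
  obtain ⟨σ, ε, rfl⟩ := exists_wreathPerm_of_mem_wreathC2Sk hg
  rw [cycleCount_wreathPerm, wreathPerm, fixedProperColorings_starGraph]
  cases a with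
  | zero => simp
  | succ a => push_cast; ring

theorem mul_cyclePoly_eval_comm {G : Subgroup (Equiv.Perm (Option (Fin k × Bool)))}
    (hB : basePairSwaps k ≤ G) (hW : G ≤ wreathC2Sk k)
    {u v : ℤ} (huv : u * (u + 1) = v * (v + 1)) :
    v * (cyclePoly G).eval u = u * (cyclePoly G).eval v := by
  have hcoset : ∀ g ∈ G, v * ∑ δ, u ^ cycleCount (g * twistHom δ) =
      u * ∑ δ, v ^ cycleCount (g * twistHom δ) := by
    intro g hg
    obtain ⟨σ, ε₀, rfl⟩ := exists_wreathPerm_of_mem_wreathC2Sk (hW hg)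
    simp only [sum_wreathPerm_mul_twistHom σ ε₀ fun g => u ^ cycleCount g,
      sum_wreathPerm_mul_twistHom σ ε₀ fun g => v ^ cycleCount g, cycleCount_wreathPerm,
      pow_succ, ← Finset.sum_mul]
    rw [sum_pow_cycleCount_prodShear_eq huv]
    ring
  have haverage : ∀ y : ℤ, (Fintype.card (Fin k → Equiv.Perm Bool) : ℤ) * (cyclePoly G).eval y =
      ∑ g : G, ∑ δ, y ^ cycleCount ((g : Equiv.Perm (Option (Fin k × Bool))) * twistHom δ) :=
    fun y => by
      rw [cyclePoly_eval, ← nsmul_eq_mul]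
      -- the two sums over `G` carry different `Fintype G` instances
      convert Subgroup.card_nsmul_sum_eq_sum_sum_mul G _
        (fun δ => hB (twistHom_mem_basePairSwaps δ)) fun g => y ^ cycleCount g
  refine mul_left_cancel₀ (a := (Fintype.card (Fin k → Equiv.Perm Bool) : ℤ))
    (Nat.cast_ne_zero.mpr Fintype.card_ne_zero) ?_
  rw [mul_left_comm, haverage, mul_left_comm, haverage, Finset.mul_sum, Finset.mul_sum]
  exact Finset.sum_congr rfl fun g _ => hcoset g g.2

end PairedStar

theorem star_reciprocal (k : ℕ)
    (G : Subgroup (Equiv.Perm (Option (Fin k × Bool))))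
    (hB : basePairSwaps k ≤ G) (hW : G ≤ wreathC2Sk k)
    (p : Polynomial ℤ) (hp : IsOrbitalChromaticPoly (starGraph k) G p) :
    p = (-1) ^ (2 * k + 1) * (cyclePoly G).comp (-X) ∧
    (X - 1) * p = X * (cyclePoly G).comp (X - 1) ∧
    X * ((cyclePoly G).comp (X - 1) + (cyclePoly G).comp (-X)) =
      (cyclePoly G).comp (-X) := by
  have hrec : X * ((cyclePoly G).comp (X - 1) + (cyclePoly G).comp (-X)) =
      (cyclePoly G).comp (-X) := Polynomial.funext fun a => by
    have h := mul_cyclePoly_eval_comm hB hW (u := a - 1) (v := -a) (by ring)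
    simp only [eval_mul, eval_add, eval_comp, eval_X, eval_sub, eval_one, eval_neg]
    linear_combination -h
  have hP : (X - 1) * p = X * (cyclePoly G).comp (X - 1) := eq_of_eval_natCast_eq fun a => by
    simp only [eval_mul, eval_sub, eval_X, eval_one, eval_comp, hp a, cyclePoly_eval,
      Finset.mul_sum]
    exact Finset.sum_congr rfl fun g _ => sub_one_mul_fixedProperColorings_starGraph (hW g.2) a
  refine ⟨mul_left_cancel₀ (X_sub_C_ne_zero (1 : ℤ)) ?_, hP, hrec⟩
  rw [C_1, hP, Odd.neg_one_pow ⟨k, rfl⟩]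
  linear_combination hrec
end
end
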